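/- Let A be an n×n complex arrowhead matrix with the property that every common eigenvector of A and A* (if any) is not orthogonal to e_n. Then any subspace L of ℂ^n that is invariant under both A and A* and contains at least one standard basis vector e_j must equal all of ℂ^n. -/

import Mathlib

/-!
If `e_j ∈ L` with `j ≠ n`, then `A e_j - a_j e_j = c_j e_n` and `A* e_j - conj(a_j) e_j = conj(b_j) e_n`
lie in `L`; so `e_n ∈ L` unless `b_j = c_j = 0`, in which case `e_j` is a reducing eigenvector
orthogonal to `e_n`. If moreover `L ≠ ℂⁿ`, then `L^⊥` is a nonzero `A`-invariant subspace
orthogonal to `e_n`, so it contains an eigenvector `x` of `A` with `x_n = 0`. On such a vector the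
arrowhead acts diagonally away from the last coordinate, so `a_i = λ` wherever `x_i ≠ 0`, and
`x` is also an eigenvector of `A*` (its last coordinate vanishes because `A* x ∈ L^⊥`):
again a reducing eigenvector orthogonal to `e_n`.
-/

open Matrix Complex

noncomputable section

def arrow {n : ℕ} (a : Fin (n + 1) → ℂ) (b c : Fin n → ℂ) :
    Matrix (Fin (n + 1)) (Fin (n + 1)) ℂ := fun i j =>
  if i = j then a i
  else if hi : i = Fin.last n then
    (if hj : j = Fin.last n then 0 else c (j.castPred hj))
  else if hj : j = Fin.last n then b (i.castPred hi)
  else 0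

open Module End in
theorem exists_hasEigenvector_mem_orthogonal {E : Type*} [NormedAddCommGroup E]
    [InnerProductSpace ℂ E] [FiniteDimensional ℂ E] {T : E →L[ℂ] E} {U : Submodule ℂ E}
    (hU : U ∈ invtSubmodule T.adjoint.toLinearMap) (hU_ne_top : U ≠ ⊤) :
    ∃ μ y, y ∈ Uᗮ ∧ HasEigenvector T.toLinearMap μ y := by
  have hUperp := T.orthogonal_mem_invtSubmodule hU
  rw [mem_invtSubmodule_iff_forall_mem_of_mem] at hUperp
  have : Nontrivial Uᗮ :=
    Submodule.nontrivial_iff_ne_bot.mpr fun h ↦ hU_ne_top (Submodule.orthogonal_eq_bot_iff.mp h)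
  obtain ⟨μ, hμ⟩ := exists_eigenvalue (T.toLinearMap.restrict hUperp)
  obtain ⟨y, hy⟩ := hμ.exists_hasEigenvector
  refine ⟨μ, y, y.2, ?_, ?_⟩
  · exact mem_eigenspace_iff.mpr (congrArg Subtype.val hy.apply_eq_smul)
  · exact_mod_cast hy.2

namespace Matrix

theorem exists_eigenvector_orthogonal_of_conjTranspose_invariant {ι : Type*}
    [Fintype ι] [DecidableEq ι] {A : Matrix ι ι ℂ} {L : Submodule ℂ (ι → ℂ)}
    (hAsL : ∀ v ∈ L, Aᴴ *ᵥ v ∈ L) (hL : L ≠ ⊤) :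
    ∃ (μ : ℂ) (x : ι → ℂ), x ≠ 0 ∧ A *ᵥ x = μ • x ∧ ∀ v ∈ L, star v ⬝ᵥ x = 0 := by
  set U := L.comap (WithLp.linearEquiv 2 ℂ (ι → ℂ)).toLinearMap
  have hU : U ∈ Module.End.invtSubmodule (toEuclideanCLM (𝕜 := ℂ) A).adjoint.toLinearMap := by
    rw [← ContinuousLinearMap.star_eq_adjoint, ← map_star, star_eq_conjTranspose,
      Module.End.mem_invtSubmodule_iff_forall_mem_of_mem]
    exact fun u hu ↦ hAsL _ hu
  have hU_ne_top : U ≠ ⊤ := fun h ↦ hL <| eq_top_iff.mpr fun v _ ↦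
    show WithLp.toLp 2 v ∈ U from h ▸ Submodule.mem_top
  obtain ⟨μ, y, hyU, hy⟩ := exists_hasEigenvector_mem_orthogonal hU hU_ne_top
  refine ⟨μ, WithLp.ofLp y, ?_, ?_, fun v hv ↦ ?_⟩
  · simpa using hy.2
  · simpa using congrArg WithLp.ofLp hy.apply_eq_smul
  · rw [dotProduct_comm]
    exact (Submodule.mem_orthogonal U y).mp hyU (WithLp.toLp 2 v) hv

theorem star_dotProduct_conjTranspose_mulVec {m n R : Type*} [Fintype m] [Fintype n]
    [CommSemiring R] [StarRing R] (A : Matrix m n R) (v : n → R) (x : m → R) :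
    star v ⬝ᵥ Aᴴ *ᵥ x = star (A *ᵥ v) ⬝ᵥ x := by
  rw [dotProduct_mulVec, star_mulVec]

end Matrix

section Arrow

variable {n : ℕ} (a : Fin (n + 1) → ℂ) (b c : Fin n → ℂ)

theorem conjTranspose_arrow : (arrow a b c)ᴴ = arrow (star a) (star c) (star b) := by
  ext i j
  simp only [conjTranspose_apply, arrow]
  split_ifs <;> simp_all [eq_comm]

theorem arrow_mulVec_apply_of_ne_last (x : Fin (n + 1) → ℂ) {i : Fin (n + 1)}
    (hi : i ≠ Fin.last n) :
    (arrow a b c *ᵥ x) i = a i * x i + b (i.castPred hi) * x (Fin.last n) := by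
  rw [mulVec, dotProduct, Fin.sum_univ_castSucc, Finset.sum_eq_single (i.castPred hi)]
  · simp [arrow, hi]
  · intro k _ hk
    have : i ≠ k.castSucc := fun h ↦ hk (by simp [h])
    simp [arrow, this, hi, (Fin.castSucc_lt_last k).ne]
  · simp

theorem arrow_mulVec_single_of_ne_last {j : Fin (n + 1)} (hj : j ≠ Fin.last n) :
    arrow a b c *ᵥ Pi.single j 1 =
      a j • Pi.single j 1 + c (j.castPred hj) • Pi.single (Fin.last n) 1 := by
  ext i
  rw [mulVec_single_one]
  by_cases hij : i = j
  · subst hij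
    simp [arrow, hj]
  by_cases hi : i = Fin.last n
  · subst hi
    simp [arrow, hij, hj]
  · simp [arrow, hij, hi, hj]

theorem single_last_mem_of_arrow_invariant {L : Submodule ℂ (Fin (n + 1) → ℂ)}
    (hAL : ∀ v ∈ L, arrow a b c *ᵥ v ∈ L) {j : Fin (n + 1)} (hj : j ≠ Fin.last n)
    (hjL : Pi.single j 1 ∈ L) (hc : c (j.castPred hj) ≠ 0) :
    Pi.single (Fin.last n) 1 ∈ L := by
  have h := hAL _ hjL
  rwa [arrow_mulVec_single_of_ne_last a b c hj,
    L.add_mem_iff_right (L.smul_mem _ hjL), L.smul_mem_iff hc] at h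

theorem conjTranspose_arrow_mulVec_apply_of_mulVec_eq_smul {x : Fin (n + 1) → ℂ} {μ : ℂ}
    (hx : x (Fin.last n) = 0) (hAx : arrow a b c *ᵥ x = μ • x) {i : Fin (n + 1)}
    (hi : i ≠ Fin.last n) :
    ((arrow a b c)ᴴ *ᵥ x) i = starRingEnd ℂ μ * x i := by
  have hai : a i * x i = μ * x i := by
    simpa [arrow_mulVec_apply_of_ne_last a b c x hi, hx] using congrFun hAx i
  rw [conjTranspose_arrow, arrow_mulVec_apply_of_ne_last _ _ _ x hi, hx, mul_zero, add_zero]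
  rcases eq_or_ne (x i) 0 with hxi | hxi
  · rw [hxi, mul_zero, mul_zero]
  · rw [Pi.star_apply, mul_right_cancel₀ hxi hai]
    rfl

end Arrow

/-- if every reducing eigenvector of an arrowhead matrix has a
nonzero last coordinate, then any reducing subspace containing a standard basis
vector is the whole space. -/
theorem stmt2 {n : ℕ} (a : Fin (n + 1) → ℂ) (b c : Fin n → ℂ)
    (A : Matrix (Fin (n + 1)) (Fin (n + 1)) ℂ) (hA : A = arrow a b c)
    (hred : ∀ (x : Fin (n + 1) → ℂ) (lam : ℂ), x ≠ 0 →
      A.mulVec x = lam • x → Aᴴ.mulVec x = (starRingEnd ℂ lam) • x →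
      x (Fin.last n) ≠ 0)
    (L : Submodule ℂ (Fin (n + 1) → ℂ))
    (hAL : ∀ v ∈ L, A.mulVec v ∈ L)
    (hAsL : ∀ v ∈ L, Aᴴ.mulVec v ∈ L)
    (hbasis : ∃ j : Fin (n + 1), (Pi.single j 1 : Fin (n + 1) → ℂ) ∈ L) :
    L = ⊤ := by
  subst hA
  obtain ⟨j, hj⟩ := hbasis
  have hlast : (Pi.single (Fin.last n) 1 : Fin (n + 1) → ℂ) ∈ L := by
    rcases eq_or_ne j (Fin.last n) with rfl | hj_ne
    · exact hj
    rw [conjTranspose_arrow] at hAsL hred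
    by_cases hc : c (j.castPred hj_ne) = 0
    · by_cases hb : b (j.castPred hj_ne) = 0
      · refine absurd ?_ (hred (Pi.single j 1) (a j) (by simp) ?_ ?_)
        · simp [hj_ne]
        · simp [arrow_mulVec_single_of_ne_last _ _ _ hj_ne, hc]
        · simp [arrow_mulVec_single_of_ne_last _ _ _ hj_ne, hb]
      · exact single_last_mem_of_arrow_invariant _ _ _ hAsL hj_ne hj (by simpa using hb)
    · exact single_last_mem_of_arrow_invariant a b c hAL hj_ne hj hc
  by_contra hL
  obtain ⟨μ, x, hx0, hAx, hxL⟩ :=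
    exists_eigenvector_orthogonal_of_conjTranspose_invariant hAsL hL
  have hxlast : x (Fin.last n) = 0 := by simpa using hxL _ hlast
  refine hred x μ hx0 hAx (funext fun i ↦ ?_) hxlast
  rcases eq_or_ne i (Fin.last n) with rfl | hi
  · have h := hxL _ (hAL _ hlast)
    rw [← star_dotProduct_conjTranspose_mulVec] at h
    simpa [hxlast] using h
  · exact conjTranspose_arrow_mulVec_apply_of_mulVec_eq_smul a b c hxlast hAx hi
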